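/- For any Hermitian matrix H on an n-qubit system A and any single-qubit pure state |r⟩ on a qubit system R, ‖H‖₁ = 2 · max over unitaries U on AR of Tr[(I_A ⊗ |0⟩⟨0|_R) U (H ⊗ |r⟩⟨r|) U†] − Tr H. -/

import Mathlib

open Matrix Kronecker

/-- Trace norm of a Hermitian matrix: sum of absolute values of eigenvalues. -/
noncomputable def traceNorm {n : Type*} [Fintype n] [DecidableEq n] (H : Matrix n n ℂ) : ℝ :=
  if h : H.IsHermitian then ∑ i, |h.eigenvalues i| else 0

/-!
Write `H = V diag(λ) V†` and `|r⟩⟨r| = W |0⟩⟨0| W†` with `V`, `W` unitary. Absorbing `V ⊗ W`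
into `U`, the quantity to maximise is `Tr[P T D T†]`, where `T` is unitary and
`P = diag(p)`, `D = diag(d)` with `p (i, k) = [k = 0]` and `d (i, k) = λᵢ [k = 0]`. This trace is
`∑_b d_b ∑_a p_a |T_ab|²`, and the inner sums lie in `[0, 1]` because the columns of `T` are unit
vectors, so it is at most `∑_b d_b⁺ = ∑ᵢ λᵢ⁺`. The bound is attained by the permutation matrix
that moves the eigenvector of each negative `λᵢ` from the `|0⟩` to the `|1⟩` slot. Finally
`|λ| = 2 λ⁺ - λ`.
-/

open ComplexConjugate

lemma exists_mem_unitary_conj_conj_iff {A : Type*} [Monoid A] [StarMul A] {Q : A}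
    (hQ : Q ∈ unitary A) (M : A) (P : A → Prop) :
    (∃ U ∈ unitary A, P (U * (Q * M * star Q) * star U)) ↔
      ∃ U ∈ unitary A, P (U * M * star U) := by
  constructor
  · rintro ⟨U, hU, h⟩
    exact ⟨U * Q, mul_mem hU hQ, by simpa only [star_mul, mul_assoc] using h⟩
  · rintro ⟨U, hU, h⟩
    refine ⟨U * star Q, mul_mem hU (Unitary.star_mem hQ), ?_⟩
    simpa only [star_mul, star_star, mul_assoc, Unitary.star_mul_self_of_mem hQ, mul_one,
      ← mul_assoc (star Q) Q, one_mul] using h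

namespace Matrix

lemma mul_mul_star_kronecker_mul_mul_star {ι κ R : Type*} [Fintype ι] [Fintype κ]
    [CommSemiring R] [StarRing R] (U A : Matrix ι ι R) (W B : Matrix κ κ R) :
    (U * A * star U) ⊗ₖ (W * B * star W) = (U ⊗ₖ W) * (A ⊗ₖ B) * star (U ⊗ₖ W) := by
  simp only [star_eq_conjTranspose, conjTranspose_kronecker, mul_kronecker_mul]

lemma exists_mem_unitaryGroup_vecMulVec_eq {r : Fin 2 → ℂ} (hr : star r ⬝ᵥ r = 1) :
    ∃ W ∈ unitaryGroup (Fin 2) ℂ, vecMulVec r (star r) = W * single 0 0 1 * star W := by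
  have hr' : conj (r 0) * r 0 + conj (r 1) * r 1 = 1 := by
    simpa [dotProduct, Fin.sum_univ_two] using hr
  refine ⟨!![r 0, -conj (r 1); r 1, conj (r 0)], ?_, ?_⟩
  · rw [mem_unitaryGroup_iff']
    ext i j
    fin_cases i <;> fin_cases j <;> simp [mul_apply, Fin.sum_univ_two, star_eq_conjTranspose]
    all_goals first | linear_combination hr' | ring
  · ext i j
    fin_cases i <;> fin_cases j <;>
      simp [mul_apply, Fin.sum_univ_two, vecMulVec_apply, vecMul, dotProduct, single_apply]

variable {ι : Type*} [Fintype ι] [DecidableEq ι]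

section Perm

variable {R : Type*} [Semiring R] [StarRing R]

lemma permMatrix_mem_unitary (σ : Equiv.Perm ι) : σ.permMatrix R ∈ unitary (Matrix ι ι R) := by
  simp only [Unitary.mem_iff, star_eq_conjTranspose, conjTranspose_permMatrix, ← permMatrix_mul,
    inv_mul_cancel, mul_inv_cancel, permMatrix_one, and_self]

lemma permMatrix_mul_diagonal_mul_star (σ : Equiv.Perm ι) (d : ι → R) :
    σ.permMatrix R * diagonal d * star (σ.permMatrix R) = diagonal (d ∘ σ) := by
  rw [star_eq_conjTranspose, conjTranspose_permMatrix, PEquiv.toMatrix_toPEquiv_mul,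
    PEquiv.mul_toMatrix_toPEquiv, submatrix_submatrix]
  exact submatrix_diagonal_equiv d σ

end Perm

lemma sum_normSq_apply_eq_one_of_mem_unitaryGroup {T : Matrix ι ι ℂ}
    (hT : T ∈ unitaryGroup ι ℂ) (b : ι) : ∑ a, Complex.normSq (T a b) = 1 := by
  have h := congr_fun (congr_fun (mem_unitaryGroup_iff'.mp hT) b) b
  simp only [mul_apply, star_apply, one_apply_eq, RCLike.star_def,
    ← Complex.normSq_eq_conj_mul_self] at h
  exact_mod_cast h

lemma trace_diagonal_mul_conj_diagonal (p d : ι → ℝ) (T : Matrix ι ι ℂ) :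
    (diagonal (fun a => (p a : ℂ)) * (T * diagonal (fun b => (d b : ℂ)) * star T)).trace =
      ((∑ b, d b * ∑ a, p a * Complex.normSq (T a b) : ℝ) : ℂ) := by
  simp only [trace, diag_apply, diagonal_mul]
  simp only [mul_apply (M := T * _), mul_diagonal, star_apply, RCLike.star_def, Finset.mul_sum]
  push_cast
  rw [Finset.sum_comm]
  refine Finset.sum_congr rfl fun b _ => Finset.sum_congr rfl fun a _ => ?_
  rw [Complex.normSq_eq_conj_mul_self]
  ring

lemma sum_mul_sum_normSq_le_sum_posPart {p : ι → ℝ} (hp0 : ∀ a, 0 ≤ p a) (hp1 : ∀ a, p a ≤ 1)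
    (d : ι → ℝ) {T : Matrix ι ι ℂ} (hT : T ∈ unitaryGroup ι ℂ) :
    ∑ b, d b * ∑ a, p a * Complex.normSq (T a b) ≤ ∑ b, (d b)⁺ := by
  refine Finset.sum_le_sum fun b _ => ?_
  set c := ∑ a, p a * Complex.normSq (T a b)
  have hc0 : 0 ≤ c := Finset.sum_nonneg fun a _ => mul_nonneg (hp0 a) (Complex.normSq_nonneg _)
  have hc1 : c ≤ 1 :=
    calc c ≤ ∑ a, Complex.normSq (T a b) :=
          Finset.sum_le_sum fun a _ => mul_le_of_le_one_left (Complex.normSq_nonneg _) (hp1 a)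
      _ = 1 := sum_normSq_apply_eq_one_of_mem_unitaryGroup hT b
  calc d b * c ≤ (d b)⁺ * c := mul_le_mul_of_nonneg_right (le_posPart _) hc0
    _ ≤ (d b)⁺ := mul_le_of_le_one_right (posPart_nonneg _) hc1

theorem isGreatest_trace_diagonal_mul_conj_diagonal {p : ι → ℝ} (hp0 : ∀ a, 0 ≤ p a)
    (hp1 : ∀ a, p a ≤ 1) (d : ι → ℝ) (σ : Equiv.Perm ι)
    (hσ : ∀ b, p b * d (σ b) = (d (σ b))⁺) :
    IsGreatest {y : ℝ | ∃ U ∈ unitaryGroup ι ℂ,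
      (diagonal (fun a => (p a : ℂ)) * (U * diagonal (fun b => (d b : ℂ)) * star U)).trace = y}
      (∑ b, (d b)⁺) := by
  refine ⟨⟨σ.permMatrix ℂ, permMatrix_mem_unitary σ, ?_⟩, ?_⟩
  · rw [permMatrix_mul_diagonal_mul_star, diagonal_mul_diagonal, trace_diagonal,
      ← Equiv.sum_comp σ (fun b => (d b)⁺)]
    push_cast
    exact Finset.sum_congr rfl fun b _ => by simp only [Function.comp_apply]; exact_mod_cast hσ b
  · rintro y ⟨U, hU, hy⟩
    rw [trace_diagonal_mul_conj_diagonal] at hy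
    exact Complex.ofReal_injective hy ▸ sum_mul_sum_normSq_le_sum_posPart hp0 hp1 d hU

theorem isGreatest_trace_kronecker_single_mul_conj (ev : ι → ℝ) :
    IsGreatest {y : ℝ | ∃ U ∈ unitaryGroup (ι × Fin 2) ℂ,
      ((1 : Matrix ι ι ℂ) ⊗ₖ single 0 0 1 *
        (U * (diagonal (RCLike.ofReal ∘ ev) ⊗ₖ single 0 0 1) * star U)).trace = (y : ℂ)}
      (∑ i, (ev i)⁺) := by
  set p : ι × Fin 2 → ℝ := fun z => if z.2 = 0 then 1 else 0
  set d : ι × Fin 2 → ℝ := fun z => ev z.1 * p z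
  have hP : (1 : Matrix ι ι ℂ) ⊗ₖ single 0 0 1 = diagonal (fun z => (p z : ℂ)) := by
    rw [← diagonal_one, ← diagonal_single, diagonal_kronecker_diagonal]
    congr; ext ⟨i, k⟩; fin_cases k <;> simp [p]
  have hD : diagonal (RCLike.ofReal ∘ ev) ⊗ₖ single 0 0 1 = diagonal (fun z => (d z : ℂ)) := by
    rw [← diagonal_single, diagonal_kronecker_diagonal]
    congr; ext ⟨i, k⟩; fin_cases k <;> simp [d, p]
  set σ : Equiv.Perm (ι × Fin 2) :=
    (Equiv.refl ι).prodShear fun i => if ev i < 0 then Equiv.swap 0 1 else Equiv.refl _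
  have hσ : ∀ z, p z * d (σ z) = (d (σ z))⁺ := by
    rintro ⟨i, k⟩
    by_cases hi : ev i < 0
    · fin_cases k <;> simp [p, d, σ, hi, hi.le]
    · fin_cases k <;> simp [p, d, σ, hi, not_lt.mp hi]
  have hsum : ∑ z, (d z)⁺ = ∑ i, (ev i)⁺ := by
    simp [Fintype.sum_prod_type, Fin.sum_univ_two, d, p]
  rw [hP, hD, ← hsum]
  exact isGreatest_trace_diagonal_mul_conj_diagonal
    (fun z => by dsimp [p]; split_ifs <;> norm_num) (fun z => by dsimp [p]; split_ifs <;> norm_num)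
    d σ hσ

end Matrix

/-- `‖H‖₁ = 2·max_U Tr[(I_A ⊗ |0⟩⟨0|_R) U (H ⊗ |r⟩⟨r|) U†] − Tr H`. -/
theorem traceNorm_eq_two_max_sub_trace (n : ℕ)
    (H : Matrix (Fin (2 ^ n)) (Fin (2 ^ n)) ℂ) (hH : H.IsHermitian)
    (r : Fin 2 → ℂ) (hr : star r ⬝ᵥ r = 1) :
    ∃ x : ℝ,
      IsGreatest {y : ℝ | ∃ U ∈ Matrix.unitaryGroup (Fin (2 ^ n) × Fin 2) ℂ,
          (((1 : Matrix (Fin (2 ^ n)) (Fin (2 ^ n)) ℂ) ⊗ₖ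
              Matrix.single (0 : Fin 2) (0 : Fin 2) (1 : ℂ)) *
            (U * (H ⊗ₖ Matrix.vecMulVec r (star r)) * star U)).trace = (y : ℂ)} x ∧
      (traceNorm H : ℂ) = 2 * (x : ℂ) - H.trace := by
  obtain ⟨W, hW, hrW⟩ := exists_mem_unitaryGroup_vecMulVec_eq hr
  set V := hH.eigenvectorUnitary.val
  have hM : H ⊗ₖ vecMulVec r (star r) =
      (V ⊗ₖ W) * (diagonal (RCLike.ofReal ∘ hH.eigenvalues) ⊗ₖ single 0 0 1) * star (V ⊗ₖ W) := by
    conv_lhs => rw [hH.spectral_theorem, Unitary.conjStarAlgAut_apply, hrW]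
    exact mul_mul_star_kronecker_mul_mul_star _ _ _ _
  have hVW : V ⊗ₖ W ∈ unitaryGroup _ ℂ := kronecker_mem_unitary hH.eigenvectorUnitary.2 hW
  refine ⟨∑ i, (hH.eigenvalues i)⁺, ?_, ?_⟩
  · rw [hM]
    convert isGreatest_trace_kronecker_single_mul_conj hH.eigenvalues using 2
    exact funext fun y : ℝ => propext <|
      exists_mem_unitary_conj_conj_iff hVW _ fun N => ((1 ⊗ₖ single 0 0 1) * N).trace = (y : ℂ)
  · have habs : ∑ i, |hH.eigenvalues i| =
        2 * ∑ i, (hH.eigenvalues i)⁺ - ∑ i, hH.eigenvalues i := by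
      rw [Finset.mul_sum, ← Finset.sum_sub_distrib]
      refine Finset.sum_congr rfl fun i _ => ?_
      rw [eq_sub_of_add_eq (abs_add_eq_two_nsmul_posPart _), two_nsmul, two_mul]
    rw [traceNorm, dif_pos hH, hH.trace_eq_sum_eigenvalues, habs]
    push_cast
    rfl
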